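/- Substituting ψ₂*⁰ = (∂_u T)³ Υ∘(relabeled) into the field equation ð ψ₂*⁰ + L ∂_u ψ₂*⁰ + 3(∂_u L) ψ₂*⁰ = 0 (source-free case), where L = −ðT/∂_u T, yields the equation ð Υ − (ðT/∂_u T) ∂_u Υ = 0 for Υ; hence in the vacuum case ψ₂*⁰ = (∂_u T)³ Υ̂(T) for an arbitrary function Υ̂. -/

import Mathlib

/-!
With `ð f = P ∂_z f` and `L ∂_u T = −ðT`, the operator `D = ð + L ∂_u` is a derivation and
annihilates every function of `T`. Since `∂_u` commutes with `ð`, differentiating `L ∂_u T = −ðT`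
in `u` gives the transport equation `D(∂_u T) + (∂_u L) ∂_u T = 0`. Hence, by the Leibniz rule,
`D((∂_u T)ⁿ Υ) + n (∂_u L) (∂_u T)ⁿ Υ = (∂_u T)ⁿ DΥ`, and the right side vanishes for `Υ = Υ̂ ∘ T`.
-/

variable {𝕜 : Type*} [NontriviallyNormedField 𝕜]

theorem deriv_pow_mul {f g : 𝕜 → 𝕜} {x : 𝕜} (n : ℕ) (hf : DifferentiableAt 𝕜 f x)
    (hg : DifferentiableAt 𝕜 g x) :
    deriv (fun y => f y ^ n * g y) x = n * f x ^ (n - 1) * deriv f x * g x + f x ^ n * deriv g x :=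
  ((hf.hasDerivAt.pow n).mul hg.hasDerivAt).deriv

theorem deriv_div_mul_add_div_mul_deriv {s t : 𝕜 → 𝕜} {x : 𝕜} (hs : DifferentiableAt 𝕜 s x)
    (ht : DifferentiableAt 𝕜 t x) (hx : t x ≠ 0) :
    deriv (fun y => s y / t y) x * t x + s x / t x * deriv t x = deriv s x := by
  rw [(hs.hasDerivAt.fun_div ht.hasDerivAt hx).deriv]
  field_simp
  ring

section Transport

-- `ζ` is a spectator: these are the functions of `(u, z)` at fixed `ζ`, and `p` is `P` at the point.
variable {T Tu Tz L Υ : 𝕜 → 𝕜 → 𝕜} {p u z : 𝕜}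

theorem transport_Tu (hTu1 : DifferentiableAt 𝕜 (fun v => Tu v z) u)
    (hTz1 : DifferentiableAt 𝕜 (fun v => Tz v z) u)
    (hcomm : deriv (fun w => Tu u w) z = deriv (fun v => Tz v z) u) (hne : Tu u z ≠ 0)
    (hL : ∀ v, L v z = -(p * Tz v z) / Tu v z) :
    p * deriv (fun w => Tu u w) z + L u z * deriv (fun v => Tu v z) u +
      Tu u z * deriv (fun v => L v z) u = 0 := by
  have hLTu := deriv_div_mul_add_div_mul_deriv (s := fun v => -(p * Tz v z))
    (hTz1.const_mul p).fun_neg hTu1 hne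
  rw [((hTz1.hasDerivAt.const_mul p).fun_neg).deriv] at hLTu
  simp only [hL, hcomm]
  linear_combination hLTu

theorem transport_pow_mul (n : ℕ) (hTu1 : DifferentiableAt 𝕜 (fun v => Tu v z) u)
    (hTu2 : DifferentiableAt 𝕜 (fun w => Tu u w) z) (hTz1 : DifferentiableAt 𝕜 (fun v => Tz v z) u)
    (hcomm : deriv (fun w => Tu u w) z = deriv (fun v => Tz v z) u)
    (hΥ1 : DifferentiableAt 𝕜 (fun v => Υ v z) u) (hΥ2 : DifferentiableAt 𝕜 (fun w => Υ u w) z)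
    (hne : Tu u z ≠ 0) (hL : ∀ v, L v z = -(p * Tz v z) / Tu v z) :
    p * deriv (fun w => Tu u w ^ n * Υ u w) z + L u z * deriv (fun v => Tu v z ^ n * Υ v z) u +
        n * deriv (fun v => L v z) u * (Tu u z ^ n * Υ u z) =
      Tu u z ^ n * (p * deriv (fun w => Υ u w) z + L u z * deriv (fun v => Υ v z) u) := by
  have htransport := transport_Tu hTu1 hTz1 hcomm hne hL
  have hpow : (n : 𝕜) * Tu u z ^ n = n * (Tu u z ^ (n - 1) * Tu u z) := by
    cases n <;> simp [pow_succ]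
  rw [deriv_pow_mul n hTu2 hΥ2, deriv_pow_mul n hTu1 hΥ1]
  linear_combination (n * Tu u z ^ (n - 1) * Υ u z) * htransport +
    (deriv (fun v => L v z) u * Υ u z) * hpow

theorem transport_comp {Υhat : 𝕜 → 𝕜} (hΥhat : DifferentiableAt 𝕜 Υhat (T u z))
    (hT1 : DifferentiableAt 𝕜 (fun v => T v z) u) (hT2 : DifferentiableAt 𝕜 (fun w => T u w) z)
    (hTu : Tu u z = deriv (fun v => T v z) u) (hTz : Tz u z = deriv (fun w => T u w) z)
    (hne : Tu u z ≠ 0) (hL : L u z = -(p * Tz u z) / Tu u z) :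
    p * deriv (fun w => Υhat (T u w)) z + L u z * deriv (fun v => Υhat (T v z)) u = 0 := by
  have hLTu : L u z * Tu u z = -(p * Tz u z) := by
    rw [hL]
    field_simp
  have hz : deriv (fun w => Υhat (T u w)) z = deriv Υhat (T u z) * Tz u z := by
    rw [hTz]
    exact (hΥhat.hasDerivAt.comp z hT2.hasDerivAt).deriv
  have hu : deriv (fun v => Υhat (T v z)) u = deriv Υhat (T u z) * Tu u z := by
    rw [hTu]
    exact (hΥhat.hasDerivAt.comp u hT1.hasDerivAt).deriv
  rw [hz, hu]
  linear_combination deriv Υhat (T u z) * hLTu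

end Transport

/-- substituting `ψ₂*⁰ = (∂_u T)³ Υ` into the source-free field
equation `ð ψ₂*⁰ + L ∂_u ψ₂*⁰ + 3(∂_u L) ψ₂*⁰ = 0`, with `L = −ðT/∂_u T` and
`ð f = P ∂_ζ̃ f`, `P = 1+ζζ̃`, one finds
`ð ψ + L ∂_u ψ + 3(∂_u L) ψ = (∂_u T)³ (ð Υ + L ∂_u Υ)`; hence the field equation
holds iff `ð Υ − (ðT/∂_u T) ∂_u Υ = 0`, which is solved by `Υ = Υ̂ ∘ T` for an
arbitrary differentiable `Υ̂` (in particular `ψ₂*⁰ = (∂_u T)³ Υ̂(T)` in vacuum). -/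
theorem stmt_12 (T Υ Tu Tz L ψ : ℂ → ℂ → ℂ → ℂ)
    (hT1 : ∀ ζ z : ℂ, Differentiable ℂ (fun u => T u ζ z))
    (hT2 : ∀ u ζ : ℂ, Differentiable ℂ (fun z => T u ζ z))
    (hTu : ∀ u ζ z : ℂ, Tu u ζ z = deriv (fun v => T v ζ z) u)
    (hTz : ∀ u ζ z : ℂ, Tz u ζ z = deriv (fun w => T u ζ w) z)
    (hTu1 : ∀ ζ z : ℂ, Differentiable ℂ (fun u => Tu u ζ z))
    (hTu2 : ∀ u ζ : ℂ, Differentiable ℂ (fun z => Tu u ζ z))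
    (hTz1 : ∀ ζ z : ℂ, Differentiable ℂ (fun u => Tz u ζ z))
    (hcomm : ∀ u ζ z : ℂ,
      deriv (fun w => Tu u ζ w) z = deriv (fun v => Tz v ζ z) u)
    (hΥ1 : ∀ ζ z : ℂ, Differentiable ℂ (fun u => Υ u ζ z))
    (hΥ2 : ∀ u ζ : ℂ, Differentiable ℂ (fun z => Υ u ζ z))
    (hne : ∀ u ζ z : ℂ, Tu u ζ z ≠ 0)
    (hL : ∀ u ζ z : ℂ, L u ζ z = -((1 + ζ * z) * Tz u ζ z) / Tu u ζ z)
    (hψ : ∀ u ζ z : ℂ, ψ u ζ z = (Tu u ζ z) ^ 3 * Υ u ζ z) :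
    (∀ u ζ z : ℂ,
      (1 + ζ * z) * deriv (fun w => ψ u ζ w) z +
          L u ζ z * deriv (fun v => ψ v ζ z) u +
          3 * deriv (fun v => L v ζ z) u * ψ u ζ z =
        (Tu u ζ z) ^ 3 *
          ((1 + ζ * z) * deriv (fun w => Υ u ζ w) z +
            L u ζ z * deriv (fun v => Υ v ζ z) u)) ∧
    (∀ Υhat : ℂ → ℂ, Differentiable ℂ Υhat →
      (∀ u ζ z : ℂ, Υ u ζ z = Υhat (T u ζ z)) →
      ∀ u ζ z : ℂ,
        (1 + ζ * z) * deriv (fun w => ψ u ζ w) z +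
            L u ζ z * deriv (fun v => ψ v ζ z) u +
            3 * deriv (fun v => L v ζ z) u * ψ u ζ z = 0) := by
  have field_eq (u ζ z : ℂ) := transport_pow_mul (Tu := fun v w => Tu v ζ w)
    (Tz := fun v w => Tz v ζ w) (L := fun v w => L v ζ w) (Υ := fun v w => Υ v ζ w) 3
    (hTu1 ζ z u) (hTu2 u ζ z) (hTz1 ζ z u) (hcomm u ζ z) (hΥ1 ζ z u) (hΥ2 u ζ z) (hne u ζ z)
    (fun v => hL v ζ z)
  simp only [Nat.cast_ofNat] at field_eq
  simp only [hψ]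
  refine ⟨field_eq, fun Υhat hΥhat hcomp u ζ z => ?_⟩
  rw [field_eq]
  simp only [hcomp]
  exact mul_eq_zero_of_right _ <| transport_comp (T := fun v w => T v ζ w)
    (Tu := fun v w => Tu v ζ w) (Tz := fun v w => Tz v ζ w) (L := fun v w => L v ζ w) (hΥhat _)
    (hT1 ζ z u) (hT2 u ζ z) (hTu u ζ z) (hTz u ζ z) (hne u ζ z) (hL u ζ z)
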